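/- arXiv:1204.1810 — 4 statements merged into one kernel-verified Lean document; each statement's English description precedes it below -/
import Mathlib

section
/- If 𝔰 < 𝔟, then 𝔰 = 𝔰_{ω,ω}. More precisely: if ⟨e_α : α < κ⟩ is a splitting family of size κ < 𝔟, then it is (ω,ω)-splitting. -/
open Set

def Splits (x a : Set ℕ) : Prop := (a ∩ x).Infinite ∧ (a \ x).Infinite

def SplittingFamily (F : Set (Set ℕ)) : Prop :=
  ∀ a : Set ℕ, a.Infinite → ∃ x ∈ F, Splits x a

def OmegaOmegaSplitting (F : Set (Set ℕ)) : Prop :=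
  ∀ a : ℕ → Set ℕ, (∀ n, (a n).Infinite) →
    ∃ x ∈ F, {n | (a n ∩ x).Infinite}.Infinite ∧ {n | (a n \ x).Infinite}.Infinite

noncomputable def sNum : Cardinal :=
  sInf {c | ∃ F : Set (Set ℕ), SplittingFamily F ∧ Cardinal.mk F = c}

noncomputable def sOmegaOmegaNum : Cardinal :=
  sInf {c | ∃ F : Set (Set ℕ), OmegaOmegaSplitting F ∧ Cardinal.mk F = c}

def ADFamily (A : Set (Set ℕ)) : Prop :=
  (∀ a ∈ A, a.Infinite) ∧ A.Pairwise fun a b => (a ∩ b).Finite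

def MADFamily (A : Set (Set ℕ)) : Prop :=
  ADFamily A ∧ A.Infinite ∧ ∀ B, ADFamily B → A ⊆ B → A = B

noncomputable def aNum : Cardinal :=
  sInf {c | ∃ A : Set (Set ℕ), MADFamily A ∧ Cardinal.mk A = c}

/-- The ideal generated by an a.d. family together with the finite sets:
`b ∈ adIdeal A` iff `b ⊆* a₀ ∪ ⋯ ∪ a_k` for finitely many members of `A`. -/
def adIdeal (A : Set (Set ℕ)) : Set (Set ℕ) :=
  {b | ∃ S : Finset (Set ℕ), ↑S ⊆ A ∧ (b \ ⋃ a ∈ S, a).Finite}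

def CompSep (A : Set (Set ℕ)) : Prop :=
  ∀ b : Set ℕ, b ∉ adIdeal A → ∃ a ∈ A, a ⊆ b

noncomputable def bNum : Cardinal :=
  sInf {c | ∃ F : Set (ℕ → ℕ),
    (∀ g : ℕ → ℕ, ∃ f ∈ F, {n | g n < f n}.Infinite) ∧ Cardinal.mk F = c}

def BlockSplitting (F : Set (Set ℕ)) : Prop :=
  ∀ s : ℕ → Finset ℕ, (∀ n, (s n).Nonempty) →
    (Pairwise fun m n => Disjoint (s m) (s n)) →
    (⋃ n, (s n : Set ℕ)) = Set.univ →
    ∃ x ∈ F, {n | (s n : Set ℕ) ⊆ x}.Infinite ∧ {n | (s n : Set ℕ) ∩ x = ∅}.Infinite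

/-- `sel x false = x = x⁰`, `sel x true = xᶜ = x¹`. -/
def sel (x : Set ℕ) : Bool → Set ℕ
  | false => x
  | true => xᶜ

/-- An element of `2^{<κ}`: a binary sequence of some length `dom < κ`. -/
structure PNode (κ : Ordinal) where
  dom : Ordinal
  dom_lt : dom < κ
  val : ∀ ξ : Ordinal, ξ < dom → Bool

/-- End-extension of nodes. -/
def PNode.Ext {κ : Ordinal} (σ τ : PNode κ) : Prop :=
  ∃ h : σ.dom ≤ τ.dom, ∀ ξ (hξ : ξ < σ.dom), σ.val ξ hξ = τ.val ξ (lt_of_lt_of_le hξ h)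

/-! If `⟨e i⟩` is bad for a sequence `aₙ` of infinite sets, then for each `i` almost every `aₙ`
meets `e i` finitely, or almost every `aₙ` meets its complement finitely. In either case the finite
piece is bounded by some `fᵢ(n)`. Fewer than `𝔟` functions `fᵢ` are dominated by a single `g`, and
picking `xₙ ∈ aₙ` above `g(n)` gives a set `{xₙ}` that no `e i` can split. -/

lemma Set.Infinite.exists_splits {a : Set ℕ} (ha : a.Infinite) : ∃ x, Splits x a := by
  set φ := Nat.nth (· ∈ a)
  have hφ_inj : φ.Injective := Nat.nth_injective ha
  have hφ_mem : ∀ k, φ k ∈ a := Nat.nth_mem_of_infinite ha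
  have h_inj (c : ℕ) : (fun k => φ (2 * k + c)).Injective := fun k l h => by
    have := hφ_inj h; omega
  refine ⟨range fun k => φ (2 * k), ?_, ?_⟩
  · refine (infinite_range_of_injective (h_inj 0)).mono ?_
    rintro _ ⟨k, rfl⟩
    exact ⟨hφ_mem _, k, rfl⟩
  · refine (infinite_range_of_injective (h_inj 1)).mono ?_
    rintro _ ⟨k, rfl⟩
    refine ⟨hφ_mem _, ?_⟩
    rintro ⟨l, hl⟩
    have := hφ_inj hl
    omega

lemma splittingFamily_univ : SplittingFamily univ :=
  fun _ ha => (ha.exists_splits).imp fun _ hx => ⟨mem_univ _, hx⟩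

lemma OmegaOmegaSplitting.splittingFamily {F : Set (Set ℕ)} (hF : OmegaOmegaSplitting F) :
    SplittingFamily F := by
  intro a ha
  obtain ⟨x, hxF, hin, hout⟩ := hF (fun _ => a) (fun _ => ha)
  exact ⟨x, hxF, hin.nonempty.some_mem, hout.nonempty.some_mem⟩

lemma exists_splittingFamily_mk_eq_sNum : ∃ F, SplittingFamily F ∧ Cardinal.mk F = sNum :=
  csInf_mem (s := {c | ∃ F : Set (Set ℕ), SplittingFamily F ∧ Cardinal.mk F = c})
    ⟨_, univ, splittingFamily_univ, rfl⟩

lemma exists_forall_finite_lt_of_mk_lt_bNum {ι : Type} (f : ι → ℕ → ℕ)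
    (h : Cardinal.mk ι < bNum) : ∃ g : ℕ → ℕ, ∀ i, {n | g n < f i n}.Finite := by
  by_contra! hf
  have hunbdd : ∀ g : ℕ → ℕ, ∃ f' ∈ range f, {n | g n < f' n}.Infinite := fun g =>
    let ⟨i, hi⟩ := hf g; ⟨f i, mem_range_self i, hi⟩
  have hb : bNum ≤ Cardinal.mk (range f) := csInf_le' ⟨range f, hunbdd, rfl⟩
  exact h.not_ge (hb.trans Cardinal.mk_range_le)

/-- `sSup` of an infinite subset of `ℕ` is the junk value `0`, so `B` bounds `aₙ ∩ t` only where
it is finite. -/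
lemma finite_range_inter_of_eventually_finite {a : ℕ → Set ℕ} {x B : ℕ → ℕ} {t : Set ℕ}
    (hxa : ∀ n, x n ∈ a n) (hB : ∀ n, sSup (a n ∩ t) ≤ B n) (hxB : {n | x n ≤ B n}.Finite)
    (ht : {n | (a n ∩ t).Infinite}.Finite) : (range x ∩ t).Finite := by
  refine ((ht.union hxB).image x).subset ?_
  rintro _ ⟨⟨n, rfl⟩, hxt⟩
  refine ⟨n, ?_, rfl⟩
  by_cases hfin : (a n ∩ t).Finite
  · exact Or.inr ((le_csSup hfin.bddAbove ⟨hxa n, hxt⟩).trans (hB n))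
  · exact Or.inl hfin

theorem SplittingFamily.omegaOmegaSplitting_of_mk_lt_bNum {F : Set (Set ℕ)}
    (hF : SplittingFamily F) (hlt : Cardinal.mk F < bNum) : OmegaOmegaSplitting F := by
  intro a ha
  by_contra! hbad
  obtain ⟨g, hg⟩ := exists_forall_finite_lt_of_mk_lt_bNum
    (fun (e : F) n => sSup (a n ∩ e) ⊔ sSup (a n \ e)) hlt
  choose x hxa hx_gt using fun n => (ha n).exists_gt (g n ⊔ n)
  have hx_inf : (range x).Infinite :=
    infinite_of_forall_exists_gt fun n =>
      ⟨x n, mem_range_self n, (le_max_right _ _).trans_lt (hx_gt n)⟩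
  obtain ⟨e, he, hsplit⟩ := hF (range x) hx_inf
  have hxB : {n | x n ≤ sSup (a n ∩ e) ⊔ sSup (a n \ e)}.Finite :=
    (hg ⟨e, he⟩).subset fun n hn => ((le_max_left _ _).trans_lt (hx_gt n)).trans_le hn
  rcases Set.finite_or_infinite {n | (a n ∩ e).Infinite} with hin | hin
  · exact hsplit.1 <|
      finite_range_inter_of_eventually_finite hxa (fun n => le_max_left _ _) hxB hin
  · exact hsplit.2 <|
      finite_range_inter_of_eventually_finite hxa (fun n => le_max_right _ _) hxB (hbad e he hin)

/-- If `⟨e i : i ∈ ι⟩` is a splitting family of size `< 𝔟`, then it is (ω,ω)-splitting;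
consequently `𝔰 < 𝔟 → 𝔰 = 𝔰_{ω,ω}`. -/
theorem stmt1 :
    (∀ (ι : Type) (e : ι → Set ℕ), Cardinal.mk ι < bNum →
      SplittingFamily (Set.range e) → OmegaOmegaSplitting (Set.range e)) ∧
    (sNum < bNum → sNum = sOmegaOmegaNum) := by
  refine ⟨fun ι e hlt hsp => hsp.omegaOmegaSplitting_of_mk_lt_bNum
    (Cardinal.mk_range_le.trans_lt hlt), fun hlt => ?_⟩
  obtain ⟨F, hF, hF_mk⟩ := exists_splittingFamily_mk_eq_sNum
  have hFω := hF.omegaOmegaSplitting_of_mk_lt_bNum (hF_mk ▸ hlt)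
  refine le_antisymm (le_csInf ⟨_, F, hFω, rfl⟩ ?_) (hF_mk ▸ csInf_le' ⟨F, hFω, rfl⟩)
  rintro _ ⟨G, hG, rfl⟩
  exact csInf_le' ⟨G, hG.splittingFamily, rfl⟩
end

section
/- If F is an (ω,ω)-splitting family, 𝒜 is an almost disjoint family of infinite subsets of ω, and b is I(𝒜)-positive, then there exists x ∈ F such that both b ∩ x and b \ x are I(𝒜)-positive. -/
open Set

lemma adIdeal_mono {A : Set (Set ℕ)} {b c : Set ℕ} (h : c ⊆ b) (hb : b ∈ adIdeal A) :
    c ∈ adIdeal A := by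
  obtain ⟨S, hS, hfin⟩ := hb
  exact ⟨S, hS, hfin.subset fun x hx => ⟨h hx.1, hx.2⟩⟩

lemma infinite_of_not_adIdeal {A : Set (Set ℕ)} {b : Set ℕ} (hb : b ∉ adIdeal A) :
    b.Infinite := by
  by_contra h
  rw [Set.not_infinite] at h
  exact hb ⟨∅, by simp, h.subset Set.diff_subset⟩

lemma exists_inter_infinite {c : Set ℕ} (hc : c.Infinite) (T : Finset (Set ℕ))
    (h : (c \ ⋃ a ∈ T, a).Finite) : ∃ t ∈ T, (c ∩ t).Infinite := by
  by_contra hcon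
  push_neg at hcon
  have hsub : c ⊆ (c \ ⋃ a ∈ T, a) ∪ ⋃ t ∈ T, (c ∩ t) := by
    intro x hx
    by_cases hx' : x ∈ ⋃ a ∈ T, (a : Set ℕ)
    · right
      simp only [Set.mem_iUnion] at hx' ⊢
      obtain ⟨t, ht, hxt⟩ := hx'
      exact ⟨t, ht, hx, hxt⟩
    · exact Or.inl ⟨hx, hx'⟩
  exact hc ((h.union (Set.Finite.biUnion T.finite_toSet fun t ht => hcon t ht)).subset hsub)

lemma not_adIdeal_of_injective {A : Set (Set ℕ)} (hA : ADFamily A) {e : ℕ → Set ℕ}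
    (he : ∀ n, e n ∈ A) (hinj : Function.Injective e) {c : Set ℕ} {N : Set ℕ}
    (hN : N.Infinite) (hmeet : ∀ n ∈ N, (e n ∩ c).Infinite) : c ∉ adIdeal A := by
  rintro ⟨T, hT, hfin⟩
  have key : ∀ n ∈ N, e n ∈ T := by
    intro n hn
    have h1 : ((e n ∩ c) \ ⋃ a ∈ T, a).Finite :=
      hfin.subset fun x hx => ⟨hx.1.2, hx.2⟩
    obtain ⟨t, htT, hti⟩ := exists_inter_infinite (hmeet n hn) T h1
    have hent : (e n ∩ t).Infinite := hti.mono fun x hx => ⟨hx.1.1, hx.2⟩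
    by_contra hne
    have : e n ≠ t := fun h => hne (h ▸ htT)
    exact hent (hA.2 (he n) (hT htT) this)
  have : N ⊆ e ⁻¹' ↑T := fun n hn => key n hn
  exact (((T.finite_toSet).preimage hinj.injOn).subset this).not_infinite hN

lemma not_adIdeal_of_ad {A : Set (Set ℕ)} {b' c : Set ℕ} (hc : c.Infinite)
    (hsub : c ⊆ b') (had : ∀ a ∈ A, (a ∩ b').Finite) : c ∉ adIdeal A := by
  rintro ⟨T, hT, hfin⟩
  obtain ⟨t, htT, hti⟩ := exists_inter_infinite hc T hfin
  exact hti ((had t (hT htT)).subset fun x hx => ⟨hx.2, hsub hx.1⟩)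

/-- An (ω,ω)-splitting family splits every `I(𝒜)`-positive set into two positive pieces. -/
theorem stmt5 (F : Set (Set ℕ)) (hF : OmegaOmegaSplitting F)
    (A : Set (Set ℕ)) (hA : ADFamily A) (b : Set ℕ) (hb : b ∉ adIdeal A) :
    ∃ x ∈ F, b ∩ x ∉ adIdeal A ∧ b \ x ∉ adIdeal A := by
  classical
  by_cases hS : {a | a ∈ A ∧ (a ∩ b).Infinite}.Infinite
  · -- infinitely many members of A meet b infinitely
    set e : ℕ → Set ℕ := fun n => ((hS.natEmbedding _) n : Set ℕ) with he_def
    have heA : ∀ n, e n ∈ A := fun n => ((hS.natEmbedding _) n).2.1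
    have heb : ∀ n, (e n ∩ b).Infinite := fun n => ((hS.natEmbedding _) n).2.2
    have hinj : Function.Injective e :=
      Subtype.val_injective.comp (hS.natEmbedding _).injective
    obtain ⟨x, hxF, hN1, hN2⟩ := hF (fun n => e n ∩ b) heb
    refine ⟨x, hxF, ?_, ?_⟩
    · refine not_adIdeal_of_injective hA heA hinj hN1 fun n hn => ?_
      have : e n ∩ b ∩ x = e n ∩ (b ∩ x) := by rw [Set.inter_assoc]
      exact this ▸ hn
    · refine not_adIdeal_of_injective hA heA hinj hN2 fun n hn => ?_
      have : (e n ∩ b) \ x = e n ∩ (b \ x) := by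
        ext y; simp [Set.mem_diff, Set.mem_inter_iff, and_assoc]
      exact this ▸ hn
  · -- only finitely many; shrink b to an a.d. positive set
    rw [Set.not_infinite] at hS
    set Sf : Finset (Set ℕ) := hS.toFinset with hSf
    set b' : Set ℕ := b \ ⋃ a ∈ Sf, a with hb'
    have hb'pos : b' ∉ adIdeal A := by
      rintro ⟨T, hT, hfin⟩
      refine hb ⟨Sf ∪ T, ?_, ?_⟩
      · intro a ha
        rcases Finset.mem_union.mp ha with h | h
        · exact (hS.mem_toFinset.mp h).1
        · exact hT h
      · refine hfin.subset fun y hy => ?_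
        obtain ⟨hyb, hyU⟩ := hy
        constructor
        · refine ⟨hyb, fun h => hyU ?_⟩
          obtain ⟨a, ha, hya⟩ := Set.mem_iUnion₂.mp h
          exact Set.mem_iUnion₂.mpr ⟨a, Finset.mem_union_left _ ha, hya⟩
        · intro h
          obtain ⟨a, ha, hya⟩ := Set.mem_iUnion₂.mp h
          exact hyU (Set.mem_iUnion₂.mpr ⟨a, Finset.mem_union_right _ ha, hya⟩)
    have hb'inf : b'.Infinite := infinite_of_not_adIdeal hb'pos
    have had : ∀ a ∈ A, (a ∩ b').Finite := by
      intro a haA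
      by_cases hab : (a ∩ b).Infinite
      · have haSf : a ∈ Sf := hS.mem_toFinset.mpr ⟨haA, hab⟩
        have : a ∩ b' = ∅ := by
          apply Set.eq_empty_iff_forall_notMem.mpr
          rintro y ⟨hya, _, hyU⟩
          exact hyU (Set.mem_iUnion₂.mpr ⟨a, haSf, hya⟩)
        rw [this]; exact Set.finite_empty
      · rw [Set.not_infinite] at hab
        exact hab.subset fun y hy => ⟨hy.1, hy.2.1⟩
    obtain ⟨x, hxF, hN1, hN2⟩ := hF (fun _ => b') (fun _ => hb'inf)
    obtain ⟨n1, hn1⟩ := hN1.nonempty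
    obtain ⟨n2, hn2⟩ := hN2.nonempty
    refine ⟨x, hxF, ?_, ?_⟩
    · intro hmem
      have h1 : (b' ∩ x).Infinite := hn1
      have hsub : b' ∩ x ⊆ b ∩ x := Set.inter_subset_inter_left x Set.diff_subset
      exact not_adIdeal_of_ad h1 Set.inter_subset_left had (adIdeal_mono hsub hmem)
    · intro hmem
      have h2 : (b' \ x).Infinite := hn2
      have hsub : b' \ x ⊆ b \ x := Set.diff_subset_diff_left Set.diff_subset
      exact not_adIdeal_of_ad h2 Set.diff_subset had (adIdeal_mono hsub hmem)
end

section
/- If 𝒜 is an almost disjoint family and b ∉ I(𝒜), then b cannot be covered modulo finite by any countable subfamily of I(𝒜) in the following strong sense: if ⟨eₙ : n ∈ ω⟩ is a ⊆-decreasing sequence of I(𝒜)-positive subsets of b, then there exists an infinite e ⊆ b with e ⊆* eₙ for all n and e ∈ I(𝒜)⁺. -/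
open Set

lemma exists_strictMono_mem (s : ℕ → Set ℕ) (hs : ∀ n, (s n).Infinite) :
    ∃ x : ℕ → ℕ, StrictMono x ∧ ∀ n, x n ∈ s n := by
  have h : ∀ n (m : ℕ), ∃ k ∈ s n, m < k := fun n m => (hs n).exists_gt m
  choose g hg1 hg2 using h
  refine ⟨fun n => Nat.rec (g 0 0) (fun n ih => g (n+1) ih) n,
    strictMono_nat_of_lt_succ fun n => hg2 (n+1) _, fun n => ?_⟩
  cases n with
  | zero => exact hg1 0 0
  | succ n => exact hg1 (n+1) _

lemma notMem_adIdeal_of_inter_finite {A : Set (Set ℕ)} {e : Set ℕ} (he : e.Infinite)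
    (h : ∀ a ∈ A, (e ∩ a).Finite) : e ∉ adIdeal A := by
  rintro ⟨S, hS, hfin⟩
  have h1 : (e ∩ ⋃ a ∈ S, a).Finite := by
    have hsub : (e ∩ ⋃ a ∈ S, a) ⊆ ⋃ a ∈ S, e ∩ a := by
      rintro x ⟨hx, hx2⟩
      simp only [mem_iUnion] at hx2 ⊢
      obtain ⟨a, ha, hxa⟩ := hx2
      exact ⟨a, ha, hx, hxa⟩
    exact (S.finite_toSet.biUnion fun a ha => h a (hS ha)).subset hsub
  exact he ((hfin.union h1).subset fun x hx => by
    by_cases hxa : x ∈ ⋃ a ∈ S, a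
    · exact Or.inr ⟨hx, hxa⟩
    · exact Or.inl ⟨hx, hxa⟩)

/-- A ⊆-decreasing sequence of `I(𝒜)`-positive subsets of `b` has a positive
pseudo-intersection inside `b`. -/
theorem stmt6 (A : Set (Set ℕ)) (hA : ADFamily A) (b : Set ℕ) (hb : b ∉ adIdeal A)
    (e : ℕ → Set ℕ) (hsub : ∀ n, e n ⊆ b) (hpos : ∀ n, e n ∉ adIdeal A)
    (hdec : ∀ n, e (n + 1) ⊆ e n) :
    ∃ e' : Set ℕ, e'.Infinite ∧ e' ⊆ b ∧ (∀ n, (e' \ e n).Finite) ∧ e' ∉ adIdeal A := by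
  have e_anti : ∀ {n m : ℕ}, n ≤ m → e m ⊆ e n := by
    intro n m hnm
    exact antitone_nat_of_succ_le (fun k => hdec k) hnm
  set B : Set (Set ℕ) := {a ∈ A | ∀ n, (a ∩ e n).Infinite} with hBdef
  by_cases hBfin : B.Finite
  · -- Case 2: B is finite; remove ⋃B and diagonalize.
    set T : Finset (Set ℕ) := hBfin.toFinset with hTdef
    have hTA : ↑T ⊆ A := fun a ha => (hBfin.mem_toFinset.mp ha).1
    set s : ℕ → Set ℕ := fun n => e n \ ⋃ a ∈ T, a with hsdef
    have hsinf : ∀ n, (s n).Infinite := fun n hf => hpos n ⟨T, hTA, hf⟩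
    obtain ⟨x, hx, hxs⟩ := exists_strictMono_mem s hsinf
    have hxe : ∀ n, x n ∈ e n := fun n => (hxs n).1
    refine ⟨range x, infinite_range_of_injective hx.injective,
      fun y ⟨n, hn⟩ => hn ▸ hsub n (hxe n), fun n => ?_, ?_⟩
    · have hsub2 : range x \ e n ⊆ x '' Set.Iio n := by
        rintro y ⟨⟨m, rfl⟩, hy⟩
        refine ⟨m, ?_, rfl⟩
        by_contra hm
        exact hy (e_anti (le_of_not_gt hm) (hxe m))
      exact ((Set.finite_Iio n).image x).subset hsub2
    · refine notMem_adIdeal_of_inter_finite (infinite_range_of_injective hx.injective)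
        (fun a ha => ?_)
      by_cases haB : a ∈ B
      · have : range x ∩ a = ∅ := by
          ext y
          simp only [mem_inter_iff, mem_empty_iff_false, iff_false, not_and]
          rintro ⟨m, rfl⟩ hya
          exact (hxs m).2 (mem_biUnion (hBfin.mem_toFinset.mpr haB) hya)
        rw [this]; exact finite_empty
      · have : ∃ n, (a ∩ e n).Finite := by
          by_contra h
          push_neg at h
          exact haB ⟨ha, fun n => by
            have := h n
            exact fun hf => this hf⟩
        obtain ⟨n, hn⟩ := this
        have hsub2 : range x ∩ a ⊆ (x '' Set.Iio n) ∪ (a ∩ e n) := by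
          rintro y ⟨⟨m, rfl⟩, hy⟩
          by_cases hm : m < n
          · exact Or.inl ⟨m, hm, rfl⟩
          · exact Or.inr ⟨hy, e_anti (le_of_not_gt hm) (hxe m)⟩
        exact (((Set.finite_Iio n).image x).union hn).subset hsub2
  · -- Case 1: B is infinite; weave infinitely many members of B into e'.
    have hBinf : B.Infinite := hBfin
    set F : ℕ ↪ B := hBinf.natEmbedding B with hFdef
    set g : ℕ → Set ℕ := fun k => (F k : Set ℕ) with hgdef
    have hg : Function.Injective g := fun i j h => F.injective (Subtype.ext h)
    have hgB : ∀ k, g k ∈ B := fun k => (F k).2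
    set s : ℕ → Set ℕ := fun n => g (Nat.unpair n).1 ∩ e n with hsdef
    have hsinf : ∀ n, (s n).Infinite := fun n => (hgB (Nat.unpair n).1).2 n
    obtain ⟨x, hx, hxs⟩ := exists_strictMono_mem s hsinf
    have hxe : ∀ n, x n ∈ e n := fun n => (hxs n).2
    refine ⟨range x, infinite_range_of_injective hx.injective,
      fun y ⟨n, hn⟩ => hn ▸ hsub n (hxe n), fun n => ?_, ?_⟩
    · have hsub2 : range x \ e n ⊆ x '' Set.Iio n := by
        rintro y ⟨⟨m, rfl⟩, hy⟩
        refine ⟨m, ?_, rfl⟩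
        by_contra hm
        exact hy (e_anti (le_of_not_gt hm) (hxe m))
      exact ((Set.finite_Iio n).image x).subset hsub2
    · rintro ⟨S, hSA, hfin⟩
      obtain ⟨k, hk⟩ : ∃ k, g k ∉ (S : Set (Set ℕ)) := by
        by_contra h
        push_neg at h
        exact Set.infinite_range_of_injective hg
          (S.finite_toSet.subset (Set.range_subset_iff.mpr h))
      have hTinf : (range x ∩ g k).Infinite := by
        have h1 : {n : ℕ | (Nat.unpair n).1 = k}.Infinite := by
          apply Set.infinite_of_injective_forall_mem (f := fun m => Nat.pair k m)
          · intro a c h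
            have := congrArg (fun p => (Nat.unpair p).2) h
            simpa using this
          · intro m
            simp [Nat.unpair_pair]
        have h2 : x '' {n : ℕ | (Nat.unpair n).1 = k} ⊆ range x ∩ g k := by
          rintro y ⟨m, hm, rfl⟩
          exact ⟨⟨m, rfl⟩, by rw [← hm]; exact (hxs m).1⟩
        exact ((h1.image hx.injective.injOn).mono h2)
      have hgkfin : (g k ∩ ⋃ a ∈ S, a).Finite := by
        have hsub2 : (g k ∩ ⋃ a ∈ S, a) ⊆ ⋃ a ∈ S, g k ∩ a := by
          rintro y ⟨hy, hy2⟩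
          simp only [mem_iUnion] at hy2 ⊢
          obtain ⟨a, ha, hya⟩ := hy2
          exact ⟨a, ha, hy, hya⟩
        refine (S.finite_toSet.biUnion fun a ha => ?_).subset hsub2
        have hne : g k ≠ a := fun h => hk (h ▸ ha)
        exact hA.2 (hgB k).1 (hSA ha) hne
      have : ((range x ∩ g k) \ ⋃ a ∈ S, a).Infinite := by
        refine (hTinf.diff hgkfin).mono ?_
        rintro y ⟨hy1, hy2⟩
        exact ⟨hy1, fun h => hy2 ⟨hy1.2, h⟩⟩
      exact this (hfin.subset fun y hy => ⟨hy.1.1, hy.2⟩)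
end

section
/- If ⟨bₙ : n ∈ ω⟩ is a sequence of pairwise disjoint infinite subsets of ω, f ∈ ω^ω, and for each n we choose lₙ ∈ bₙ with lₙ ≥ f(n), then c = {lₙ : n ∈ ω} is infinite; moreover, for any set e ⊆ ω and g ∈ ω^ω such that g(n) ≥ max(bₙ ∩ e) whenever bₙ ∩ e is finite and nonempty bounded, if f eventually dominates g and bₙ ∩ e is finite for all large n, then c ∩ e is finite. -/
open Set

/-- A fast selector from pairwise disjoint infinite sets is infinite, and escapes any set
meeting each `b n` boundedly, provided `f` eventually dominates the bounds. -/
theorem stmt14 (b : ℕ → Set ℕ) (hinf : ∀ n, (b n).Infinite)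
    (hdisj : Pairwise fun m n => Disjoint (b m) (b n))
    (f : ℕ → ℕ) (l : ℕ → ℕ) (hl : ∀ n, l n ∈ b n) (hlf : ∀ n, f n ≤ l n) :
    (Set.range l).Infinite ∧
    ∀ (e : Set ℕ) (g : ℕ → ℕ),
      (∀ n, (b n ∩ e).Finite → ∀ m ∈ b n ∩ e, m ≤ g n) →
      (∀ᶠ n in Filter.atTop, g n < f n) →
      (∀ᶠ n in Filter.atTop, (b n ∩ e).Finite) →
      (Set.range l ∩ e).Finite := by
  have hinj : Function.Injective l := by
    intro m n hmn
    by_contra hne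
    exact (hdisj hne).ne_of_mem (hl m) (hl n) hmn
  constructor
  · exact Set.infinite_range_of_injective hinj
  · intro e g hg hgf hfin
    obtain ⟨N, hN⟩ := (hgf.and hfin).exists_forall_of_atTop
    have hsub : Set.range l ∩ e ⊆ l '' (Set.Iio N) := by
      rintro x ⟨⟨n, rfl⟩, hxe⟩
      refine ⟨n, ?_, rfl⟩
      by_contra h
      have hn := hN n (le_of_not_gt h)
      have := hg n hn.2 (l n) ⟨hl n, hxe⟩
      exact absurd (lt_of_le_of_lt (hlf n) (lt_of_le_of_lt this hn.1)) (lt_irrefl _)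
    exact ((Set.finite_Iio N).image l).subset hsub
end
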